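/- Let A = (Q, Σ, ·, i, F) be a DFA. The following two conditions are equivalent: (1) for every letter a ∈ Σ and every state s such that s = i·w for some word w with at least one occurrence of a, one has s·ua = s·aua for every word u ∈ Σ*; (2) for every letter a ∈ Σ and every state s such that s = i·w for some word w with at least one occurrence of a, one has s·ba = s·aba for every b ∈ Σ ∪ {ε}. -/
import Mathlib


/-- `subk k w` is the set of scattered subwords of `w` of length at most `k`. -/
def subk {α : Type*} (k : ℕ) (w : List α) : Set (List α) :=
  {u | u.length ≤ k ∧ u.Sublist w}

/-- Two words are `k`-equivalent if they have the same subwords of length at most `k`. -/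
def kEquiv {α : Type*} (k : ℕ) (u v : List α) : Prop :=
  subk k u = subk k v

/-- A language is `k`-piecewise testable (Simon's characterization):
`k`-equivalent words are equi-members. -/
def IsPT {α : Type*} (k : ℕ) (L : Language α) : Prop :=
  ∀ u v : List α, kEquiv k u v → (u ∈ L ↔ v ∈ L)

/-- A DFA is minimal if all states are reachable and pairwise distinguishable. -/
def IsMinimalDFA {α σ : Type*} (A : DFA α σ) : Prop :=
  (∀ q : σ, ∃ w : List α, A.eval w = q) ∧
  ∀ p q : σ,
    (∀ w : List α, (A.evalFrom p w ∈ A.accept ↔ A.evalFrom q w ∈ A.accept)) → p = q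

/-- There is a simple path (pairwise distinct states) with `m` transitions in the DFA `A`. -/
def DFAHasSimplePath {α σ : Type*} (A : DFA α σ) (m : ℕ) : Prop :=
  ∃ (qs : Fin (m + 1) → σ) (as : Fin m → α),
    Function.Injective qs ∧ ∀ i : Fin m, A.step (qs i.castSucc) (as i) = qs i.succ

/-- The depth of a DFA: the number of transitions on a longest simple path. -/
noncomputable def dfaDepth {α σ : Type*} (A : DFA α σ) : ℕ :=
  sSup {m | DFAHasSimplePath A m}

/-- There is a simple path (pairwise distinct states) with `m` transitions in the NFA `A`. -/
def NFAHasSimplePath {α σ : Type*} (A : NFA α σ) (m : ℕ) : Prop :=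
  ∃ (qs : Fin (m + 1) → σ) (as : Fin m → α),
    Function.Injective qs ∧ ∀ i : Fin m, qs i.succ ∈ A.step (qs i.castSucc) (as i)

/-- The depth of an NFA: the number of transitions on a longest simple path. -/
noncomputable def nfaDepth {α σ : Type*} (A : NFA α σ) : ℕ :=
  sSup {m | NFAHasSimplePath A m}

/-- Lemma 8 of the paper: the global condition `s·ua = s·aua` for all words `u` is
equivalent to the local condition for words `b` of length at most one
(i.e. `b ∈ Σ ∪ {ε}`). -/
theorem stmt5 {α σ : Type*} [Fintype α] [Fintype σ] (A : DFA α σ) :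
    (∀ (a : α) (s : σ), (∃ w : List α, A.eval w = s ∧ a ∈ w) →
        ∀ u : List α, A.evalFrom s (u ++ [a]) = A.evalFrom s (a :: (u ++ [a]))) ↔
    (∀ (a : α) (s : σ), (∃ w : List α, A.eval w = s ∧ a ∈ w) →
        ∀ b : List α, b.length ≤ 1 →
          A.evalFrom s (b ++ [a]) = A.evalFrom s (a :: (b ++ [a]))) := by
  constructor
  · intro h a s hs b _
    exact h a s hs b
  · intro h a s hs u
    induction u generalizing s with
    | nil => exact h a s hs [] (by simp)
    | cons c u' ih =>
      obtain ⟨w, hw, haw⟩ := hs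
      simp only [DFA.eval, DFA.evalFrom] at hw
      have hsc : ∃ w, A.eval w = A.step s c ∧ a ∈ w :=
        ⟨w ++ [c], by simp [DFA.eval, DFA.evalFrom, List.foldl_append, hw], by simp [haw]⟩
      have hsac : ∃ w, A.eval w = A.step (A.step s a) c ∧ a ∈ w :=
        ⟨w ++ [a, c], by simp [DFA.eval, DFA.evalFrom, List.foldl_append, hw], by simp [haw]⟩
      have h1 := ih (A.step s c) hsc
      have h2 := ih (A.step (A.step s a) c) hsac
      have hloc := h a s ⟨w, by simpa [DFA.eval, DFA.evalFrom] using hw, haw⟩ [c] (by simp)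
      simp only [DFA.evalFrom, List.cons_append, List.foldl_cons, List.foldl_append,
        List.foldl_nil] at h1 h2 hloc ⊢
      rw [h1, h2, hloc]
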